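/- Suppose f is quasimonotone: ∂f_i/∂u_j ≥ 0 for i ≠ j and ∂f_i/∂p_j = 0 for j ≠ i. Let E⁻, E⁺ ∈ ℝ^N satisfy f(E⁻, 0) = 0, f(E⁺, 0) = 0 and E⁻ ≤ E⁺ componentwise. If u is a bounded classical solution of u_t = A u_xx + f(u, u_x) on ℝ × [0, T] with bounded spatial derivative whose initial datum satisfies E⁻ ≤ u(x, 0) ≤ E⁺ componentwise for all x, then E⁻ ≤ u(x, t) ≤ E⁺ componentwise for all x ∈ ℝ and t ∈ [0, T]. -/

import Mathlib

/-!
Barrier argument. Fix `ε > 0` and compare `u_i - E⁺_i` with `β(x, t) = ε (1 + x²) e^{K t}`.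
Since `u` is bounded, `u_i - E⁺_i ≥ β` can only happen for `x` in a bounded set, so if it
happens at all there is a first time `t₀ > 0` and a point `x₀` where some component touches:
`u_i - E⁺_i = β` at `(x₀, t₀)` and `u_j - E⁺_j ≤ β` everywhere for `t ≤ t₀`. There
`∂ₜu_i ≥ K β`, `∂ₓu_i = ∂ₓβ` and `∂ₓ²u_i ≤ ∂ₓ²β ≤ 2β`. The mean value theorem on the segment from
`(E⁺, 0)` to `(u, uₓ)` writes `f_i(u, uₓ)` as `∑ⱼ ∂f_i/∂u_j (u_j - E⁺_j) + ∂f_i/∂p_i ∂ₓu_i`: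
quasimonotonicity is exactly what removes the uncontrolled `∂ₓu_j` (`j ≠ i`) and lets the
off-diagonal terms be bounded using `u_j - E⁺_j ≤ β` only, so `f_i ≤ (N + 2) L β` with `L` a bound
for `Df` on the relevant ball. Hence `K ≤ 2 a_ii + (N + 2) L`, which fails for `K` large; letting
`ε → 0` gives `u ≤ E⁺`. The lower bound is the upper bound for `-u`, which solves the system with
the quasimonotone nonlinearity `-f(-w, -p)`.
-/

open Matrix Filter Topology

/-- Jacobian of f with respect to its first argument. -/
noncomputable def Du {N : ℕ} (f : (Fin N → ℝ) → (Fin N → ℝ) → Fin N → ℝ)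
    (u p : Fin N → ℝ) : Matrix (Fin N) (Fin N) ℝ :=
  fun i j => fderiv ℝ (fun u' => f u' p i) u (Pi.single j 1)

/-- Jacobian of f with respect to its second argument. -/
noncomputable def Dp {N : ℕ} (f : (Fin N → ℝ) → (Fin N → ℝ) → Fin N → ℝ)
    (u p : Fin N → ℝ) : Matrix (Fin N) (Fin N) ℝ :=
  fun i j => fderiv ℝ (fun p' => f u p' i) p (Pi.single j 1)

/-- A bounded classical solution of u_t = A u_xx + f(u, u_x) on ℝ × [0, T]. -/
def IsBddClassicalSol {N : ℕ} (A : Matrix (Fin N) (Fin N) ℝ)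
    (f : (Fin N → ℝ) → (Fin N → ℝ) → Fin N → ℝ) (T : ℝ)
    (u : ℝ → ℝ → Fin N → ℝ) : Prop :=
  ContinuousOn (fun q : ℝ × ℝ => u q.1 q.2) (Set.univ ×ˢ Set.Icc 0 T) ∧
  (∃ M, ∀ x : ℝ, ∀ t ∈ Set.Icc (0 : ℝ) T,
    ‖u x t‖ ≤ M ∧ ‖deriv (fun y => u y t) x‖ ≤ M) ∧
  (∀ x : ℝ, ∀ t ∈ Set.Ioc (0 : ℝ) T, DifferentiableAt ℝ (fun s => u x s) t) ∧
  (∀ t ∈ Set.Ioc (0 : ℝ) T, ContDiff ℝ 2 (fun y => u y t)) ∧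
  (∀ x : ℝ, ∀ t ∈ Set.Ioc (0 : ℝ) T, deriv (fun s => u x s) t =
    A.mulVec (deriv (deriv (fun y => u y t)) x)
      + f (u x t) (deriv (fun y => u y t) x))

open Set Function

theorem IsLocalMax.deriv_deriv_nonpos {h : ℝ → ℝ} {a : ℝ} (hmax : IsLocalMax h a)
    (hc : ContinuousAt h a) : deriv (deriv h) a ≤ 0 := by
  by_contra! hpos
  have hmin := isLocalMin_of_deriv_deriv_pos hpos hmax.deriv_eq_zero hc
  have hconst : h =ᶠ[𝓝 a] fun _ => h a :=
    (hmax.and hmin).mono fun _ hy => le_antisymm hy.1 hy.2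
  have hderiv : deriv h =ᶠ[𝓝 a] fun _ => 0 := by simpa using hconst.deriv
  simp [hderiv.deriv_eq] at hpos

theorem HasDerivAt.nonneg_of_isMaxOn_Icc {φ : ℝ → ℝ} {φ' a b : ℝ} (hφ : HasDerivAt φ φ' b)
    (hab : a < b) (hmax : IsMaxOn φ (Icc a b) b) : 0 ≤ φ' := by
  have hcone : a - b ∈ posTangentConeAt (Icc a b) b :=
    mem_posTangentConeAt_of_segment_subset (by
      rw [add_sub_cancel, segment_symm, segment_eq_Icc hab.le])
  have := hmax.localize.hasFDerivWithinAt_nonpos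
    hφ.hasFDerivAt.hasFDerivWithinAt hcone
  rw [ContinuousLinearMap.toSpanSingleton_apply, smul_eq_mul] at this
  nlinarith

theorem deriv_eq_and_deriv_deriv_le_of_forall_sub_le {v q : ℝ → ℝ} {x : ℝ}
    (hv : ContDiff ℝ 2 v) (hq : ContDiff ℝ 2 q) (hmax : ∀ y, v y - q y ≤ v x - q x) :
    deriv v x = deriv q x ∧ deriv (deriv v) x ≤ deriv (deriv q) x := by
  have hlocal : IsLocalMax (fun y => v y - q y) x := Eventually.of_forall hmax
  have hderiv : deriv (fun y => v y - q y) = fun y => deriv v y - deriv q y :=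
    funext fun y =>
      deriv_fun_sub (hv.differentiable two_ne_zero y) (hq.differentiable two_ne_zero y)
  have h1 := hlocal.deriv_eq_zero
  have h2 := hlocal.deriv_deriv_nonpos (hv.continuous.sub hq.continuous).continuousAt
  rw [hderiv, deriv_fun_sub (hv.differentiable_deriv_two x) (hq.differentiable_deriv_two x)] at h2
  rw [hderiv] at h1
  constructor <;> linarith

theorem deriv_apply_of_differentiableAt {ι : Type*} [Fintype ι] {φ : ℝ → ι → ℝ} {x : ℝ}
    (h : DifferentiableAt ℝ φ x) (i : ι) : deriv (fun y => φ y i) x = deriv φ x i :=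
  (hasDerivAt_pi.1 h.hasDerivAt i).deriv

theorem deriv_deriv_apply_of_contDiff {ι : Type*} [Fintype ι] {φ : ℝ → ι → ℝ}
    (h : ContDiff ℝ 2 φ) (x : ℝ) (i : ι) :
    deriv (deriv fun y => φ y i) x = deriv (deriv φ) x i := by
  rw [show deriv (fun y => φ y i) = fun y => deriv φ y i from
    funext fun y => deriv_apply_of_differentiableAt (h.differentiable two_ne_zero y) i]
  exact deriv_apply_of_differentiableAt (h.differentiable_deriv_two x) i

noncomputable def barrier (ε K x t : ℝ) : ℝ := ε * (1 + x ^ 2) * Real.exp (K * t)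

section Barrier

variable {ε K : ℝ}

theorem barrier_pos (hε : 0 < ε) (x t : ℝ) : 0 < barrier ε K x t := by
  unfold barrier; positivity

theorem hasDerivAt_barrier_space (x t : ℝ) :
    HasDerivAt (fun y => barrier ε K y t) (2 * ε * Real.exp (K * t) * x) x := by
  unfold barrier
  exact ((((hasDerivAt_pow 2 x).const_add 1).const_mul ε).mul_const _).congr_deriv (by ring)

theorem contDiff_barrier_space (t : ℝ) : ContDiff ℝ 2 (fun y => barrier ε K y t) := by
  unfold barrier; fun_prop

theorem deriv_deriv_barrier_space (x t : ℝ) :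
    deriv (deriv (fun y => barrier ε K y t)) x = 2 * ε * Real.exp (K * t) := by
  have h : deriv (fun y => barrier ε K y t) = fun y => 2 * ε * Real.exp (K * t) * y :=
    funext fun y => (hasDerivAt_barrier_space y t).deriv
  rw [h]
  exact deriv_const_mul_id _

theorem hasDerivAt_barrier_time (x t : ℝ) :
    HasDerivAt (fun s => barrier ε K x s) (K * barrier ε K x t) t := by
  unfold barrier
  exact ((((hasDerivAt_id t).const_mul K).exp).const_mul (ε * (1 + x ^ 2))).congr_deriv
    (by simp only [id]; ring)

theorem mul_exp_le_barrier (hε : 0 ≤ ε) (x t : ℝ) :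
    ε * Real.exp (K * t) ≤ barrier ε K x t := by
  unfold barrier
  nlinarith [sq_nonneg x, Real.exp_pos (K * t), mul_nonneg hε (Real.exp_pos (K * t)).le]

theorem mul_exp_mul_abs_le_barrier (hε : 0 ≤ ε) (x t : ℝ) :
    ε * Real.exp (K * t) * |x| ≤ barrier ε K x t := by
  have habs : |x| ≤ 1 + x ^ 2 := by nlinarith [sq_abs x, sq_nonneg (|x| - 1)]
  unfold barrier
  nlinarith [mul_nonneg hε (Real.exp_pos (K * t)).le]

theorem mul_abs_le_barrier (hε : 0 ≤ ε) (x : ℝ) {t : ℝ} (hKt : 0 ≤ K * t) :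
    ε * |x| ≤ barrier ε K x t := by
  calc ε * |x| ≤ ε * Real.exp (K * t) * |x| := by
        gcongr
        exact le_mul_of_one_le_right hε (Real.one_le_exp hKt)
    _ ≤ barrier ε K x t := mul_exp_mul_abs_le_barrier hε x t

end Barrier

theorem exists_first_zero_time {ι : Type*} [Finite ι] {g : ι → ℝ → ℝ → ℝ} {T r : ℝ}
    (hg : ∀ j, ContinuousOn (fun q : ℝ × ℝ => g j q.1 q.2) (univ ×ˢ Icc 0 T))
    (hbdd : ∀ j x, ∀ t ∈ Icc 0 T, 0 ≤ g j x t → |x| ≤ r)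
    (hinit : ∀ j x, g j x 0 < 0) {j₀ : ι} {x₀ t₀ : ℝ} (ht₀ : t₀ ∈ Icc 0 T)
    (h₀ : 0 ≤ g j₀ x₀ t₀) :
    ∃ tc ∈ Ioc 0 T, (∃ i xc, g i xc tc = 0) ∧ ∀ s ∈ Icc 0 tc, ∀ j x, g j x s ≤ 0 := by
  set B : Set (ℝ × ℝ) := ⋃ j, (univ ×ˢ Icc 0 T) ∩ (fun q : ℝ × ℝ => g j q.1 q.2) ⁻¹' Ici 0
  have hB : IsCompact B := by
    refine ((isCompact_Icc (a := -r) (b := r)).prod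
      (isCompact_Icc (a := 0) (b := T))).of_isClosed_subset (isClosed_iUnion_of_finite fun j =>
        (hg j).preimage_isClosed_of_isClosed (isClosed_univ.prod isClosed_Icc) isClosed_Ici) ?_
    rintro ⟨x, t⟩ hq
    obtain ⟨j, ⟨-, ht⟩, hj⟩ := mem_iUnion.1 hq
    exact ⟨abs_le.1 (hbdd j x t ht hj), ht⟩
  obtain ⟨⟨xc, tc⟩, hcB, hmin⟩ := hB.exists_isMinOn
    ⟨(x₀, t₀), mem_iUnion.2 ⟨j₀, ⟨trivial, ht₀⟩, h₀⟩⟩ continuous_snd.continuousOn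
  obtain ⟨i, ⟨-, htc⟩, hi⟩ := mem_iUnion.1 hcB
  have hbefore : ∀ s ∈ Ico 0 tc, ∀ j x, g j x s < 0 := by
    intro s hs j x
    by_contra! h
    exact (hmin (a := (x, s))
      (mem_iUnion.2 ⟨j, ⟨trivial, hs.1, hs.2.le.trans htc.2⟩, h⟩)).not_gt hs.2
  have htc0 : 0 < tc := htc.1.lt_of_ne fun h => (hinit i xc).not_ge (h ▸ hi)
  have hupto : ∀ s ∈ Icc 0 tc, ∀ j x, g j x s ≤ 0 := by
    intro s hs j x
    have hcont : ContinuousOn (g j x) (Icc 0 tc) :=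
      (hg j).comp (continuous_const.prodMk continuous_id).continuousOn
        fun s (hs : s ∈ Icc 0 tc) => ⟨trivial, hs.1, hs.2.trans htc.2⟩
    have hsub : closure (Ico 0 tc) ⊆ Icc 0 tc ∩ g j x ⁻¹' Iic 0 :=
      closure_minimal (fun s hs => ⟨Ico_subset_Icc_self hs, (hbefore s hs j x).le⟩)
        (hcont.preimage_isClosed_of_isClosed isClosed_Icc isClosed_Iic)
    rw [closure_Ico htc0.ne] at hsub
    exact (hsub hs).2
  exact ⟨tc, ⟨htc0, htc.2⟩, ⟨i, xc, le_antisymm (hupto tc ⟨htc.1, le_rfl⟩ i xc) hi⟩, hupto⟩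

section Jacobian

variable {N : ℕ} {f : (Fin N → ℝ) → (Fin N → ℝ) → Fin N → ℝ} {w p : Fin N → ℝ}

theorem Du_eq_fderiv_uncurry (hf : DifferentiableAt ℝ (uncurry f) (w, p)) (i j : Fin N) :
    Du f w p i j = fderiv ℝ (uncurry f) (w, p) (Pi.single j 1, 0) i := by
  have h := (hasFDerivAt_apply i _).comp w
    (hf.hasFDerivAt.comp w (hasFDerivAt_prodMk_left (𝕜 := ℝ) w p))
  rw [Du, show (fun w' => f w' p i) = (fun g : Fin N → ℝ => g i) ∘ uncurry f ∘ (·, p) from rfl,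
    h.fderiv]
  simp

theorem Dp_eq_fderiv_uncurry (hf : DifferentiableAt ℝ (uncurry f) (w, p)) (i j : Fin N) :
    Dp f w p i j = fderiv ℝ (uncurry f) (w, p) (0, Pi.single j 1) i := by
  have h := (hasFDerivAt_apply i _).comp p
    (hf.hasFDerivAt.comp p (hasFDerivAt_prodMk_right (𝕜 := ℝ) w p))
  rw [Dp, show (fun p' => f w p' i) = (fun g : Fin N → ℝ => g i) ∘ uncurry f ∘ (w, ·) from rfl,
    h.fderiv]
  simp

theorem fderiv_uncurry_apply_eq_sum (hf : DifferentiableAt ℝ (uncurry f) (w, p))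
    (v s : Fin N → ℝ) (i : Fin N) :
    fderiv ℝ (uncurry f) (w, p) (v, s) i
      = ∑ j, Du f w p i j * v j + ∑ j, Dp f w p i j * s j := by
  have hvs : (v, s) = ∑ j, v j • ((Pi.single j 1 : Fin N → ℝ), (0 : Fin N → ℝ))
      + ∑ j, s j • ((0 : Fin N → ℝ), (Pi.single j 1 : Fin N → ℝ)) := by
    ext k <;> simp [Prod.fst_sum, Prod.snd_sum, Finset.sum_apply, Pi.single_apply]
  simp only [Du_eq_fderiv_uncurry hf, Dp_eq_fderiv_uncurry hf]
  conv_lhs => rw [hvs, map_add, map_sum, map_sum]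
  simp only [map_smul, Pi.add_apply, Finset.sum_apply, Pi.smul_apply, smul_eq_mul, mul_comm]

theorem abs_Du_le (hf : DifferentiableAt ℝ (uncurry f) (w, p)) (i j : Fin N) :
    |Du f w p i j| ≤ ‖fderiv ℝ (uncurry f) (w, p)‖ := by
  rw [Du_eq_fderiv_uncurry hf, ← Real.norm_eq_abs]
  calc _ ≤ ‖fderiv ℝ (uncurry f) (w, p) (Pi.single j 1, 0)‖ := norm_le_pi_norm _ i
    _ ≤ ‖fderiv ℝ (uncurry f) (w, p)‖ * ‖((Pi.single j 1 : Fin N → ℝ), (0 : Fin N → ℝ))‖ :=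
      ContinuousLinearMap.le_opNorm _ _
    _ = _ := by simp [Prod.norm_def, Pi.norm_single]

theorem abs_Dp_le (hf : DifferentiableAt ℝ (uncurry f) (w, p)) (i j : Fin N) :
    |Dp f w p i j| ≤ ‖fderiv ℝ (uncurry f) (w, p)‖ := by
  rw [Dp_eq_fderiv_uncurry hf, ← Real.norm_eq_abs]
  calc _ ≤ ‖fderiv ℝ (uncurry f) (w, p) (0, Pi.single j 1)‖ := norm_le_pi_norm _ i
    _ ≤ ‖fderiv ℝ (uncurry f) (w, p)‖ * ‖((0 : Fin N → ℝ), (Pi.single j 1 : Fin N → ℝ))‖ :=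
      ContinuousLinearMap.le_opNorm _ _
    _ = _ := by simp [Prod.norm_def, Pi.norm_single]

def IsQuasimonotone (f : (Fin N → ℝ) → (Fin N → ℝ) → Fin N → ℝ) : Prop :=
  ∀ (w p : Fin N → ℝ) (i j : Fin N), i ≠ j → 0 ≤ Du f w p i j ∧ Dp f w p i j = 0

theorem IsQuasimonotone.apply_sub_apply_le (hq : IsQuasimonotone f)
    {s : Set ((Fin N → ℝ) × (Fin N → ℝ))} (hs : Convex ℝ s)
    (hf : ∀ z ∈ s, DifferentiableAt ℝ (uncurry f) z) {L : ℝ}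
    (hL : ∀ z ∈ s, ‖fderiv ℝ (uncurry f) z‖ ≤ L) {e : Fin N → ℝ}
    (he : (e, 0) ∈ s) (hw : (w, p) ∈ s) {E : ℝ} {i : Fin N}
    (hwi : 0 ≤ w i - e i) (hwE : ∀ j, w j - e j ≤ E) :
    f w p i - f e 0 i ≤ L * (N * E + |p i|) := by
  obtain ⟨⟨z₁, z₂⟩, hz, hmvt⟩ := domain_mvt (f := fun q => uncurry f q i)
    (f' := fun z => (ContinuousLinearMap.proj i).comp (fderiv ℝ (uncurry f) z))
    (fun z hz => (hasFDerivAt_pi'.1 (hf z hz).hasFDerivAt i).hasFDerivWithinAt)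
    hs he hw
  have hzs : (z₁, z₂) ∈ s := hs.segment_subset he hw hz
  have hD := hf _ hzs
  have hLz := hL _ hzs
  have hL0 : 0 ≤ L := (norm_nonneg _).trans hLz
  have hE : 0 ≤ E := hwi.trans (hwE i)
  simp only [uncurry_apply_pair, ContinuousLinearMap.comp_apply, ContinuousLinearMap.proj_apply,
    Prod.mk_sub_mk, sub_zero] at hmvt
  have hDp_diag : ∑ j, Dp f z₁ z₂ i j * p j = Dp f z₁ z₂ i i * p i :=
    Finset.sum_eq_single i (fun j _ hj => by rw [(hq z₁ z₂ i j (Ne.symm hj)).2, zero_mul])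
      (by simp)
  rw [hmvt, fderiv_uncurry_apply_eq_sum hD, hDp_diag]
  have hDu : ∀ j, Du f z₁ z₂ i j * (w - e) j ≤ L * E := by
    intro j
    rcases eq_or_ne j i with rfl | hj
    · calc _ ≤ |Du f z₁ z₂ j j| * |(w - e) j| := (le_abs_self _).trans (abs_mul _ _).le
        _ ≤ L * E := mul_le_mul ((abs_Du_le hD j j).trans hLz)
          (by rw [Pi.sub_apply, abs_of_nonneg hwi]; exact hwE j) (abs_nonneg _) hL0
    · calc _ ≤ Du f z₁ z₂ i j * E := mul_le_mul_of_nonneg_left (hwE j) (hq z₁ z₂ i j hj.symm).1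
        _ ≤ L * E := mul_le_mul_of_nonneg_right
          (((le_abs_self _).trans (abs_Du_le hD i j)).trans hLz) hE
  have hDp : Dp f z₁ z₂ i i * p i ≤ L * |p i| :=
    calc _ ≤ |Dp f z₁ z₂ i i| * |p i| := (le_abs_self _).trans (abs_mul _ _).le
      _ ≤ L * |p i| := mul_le_mul_of_nonneg_right ((abs_Dp_le hD i i).trans hLz) (abs_nonneg _)
  calc _ ≤ ∑ _j : Fin N, L * E + L * |p i| := add_le_add (Finset.sum_le_sum fun j _ => hDu j) hDp
    _ = L * (N * E + |p i|) := by
      simp only [Finset.sum_const, Finset.card_univ, Fintype.card_fin, nsmul_eq_mul]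
      ring

theorem Du_neg_comp_neg (v p : Fin N → ℝ) (i j : Fin N) :
    Du (fun w q => -f (-w) (-q)) v p i j = Du f (-v) (-p) i j := by
  have h := fderiv_comp_smul (𝕜 := ℝ) (f := fun w => f w (-p) i) (x := v) (-1)
  simp only [neg_smul, one_smul] at h
  simp [Du, fderiv_fun_neg, h]

theorem Dp_neg_comp_neg (v p : Fin N → ℝ) (i j : Fin N) :
    Dp (fun w q => -f (-w) (-q)) v p i j = Dp f (-v) (-p) i j := by
  have h := fderiv_comp_smul (𝕜 := ℝ) (f := fun q => f (-v) q i) (x := p) (-1)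
  simp only [neg_smul, one_smul] at h
  simp [Dp, fderiv_fun_neg, h]

theorem IsQuasimonotone.neg_comp_neg (hq : IsQuasimonotone f) :
    IsQuasimonotone (fun w q => -f (-w) (-q)) := fun w p i j hij => by
  rw [Du_neg_comp_neg, Dp_neg_comp_neg]
  exact hq _ _ i j hij

end Jacobian

section Solution

variable {N : ℕ} {A : Matrix (Fin N) (Fin N) ℝ} {f : (Fin N → ℝ) → (Fin N → ℝ) → Fin N → ℝ}
  {T : ℝ} {u : ℝ → ℝ → Fin N → ℝ}

theorem IsBddClassicalSol.neg (hu : IsBddClassicalSol A f T u) :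
    IsBddClassicalSol A (fun w q => -f (-w) (-q)) T (fun x t => -u x t) := by
  obtain ⟨hcont, ⟨M, hM⟩, hdt, hC2, heq⟩ := hu
  have hneg : ∀ g : ℝ → Fin N → ℝ, deriv (fun y => -g y) = fun y => -deriv g y :=
    fun _ => deriv.neg'
  refine ⟨hcont.neg, ⟨M, fun x t ht => by simpa [hneg] using hM x t ht⟩,
    fun x t ht => (hdt x t ht).neg, fun t ht => (hC2 t ht).neg, fun x t ht => ?_⟩
  simp only [hneg, heq x t ht, neg_neg, Matrix.mulVec_neg, neg_add]

theorem IsBddClassicalSol.deriv_space_apply (hu : IsBddClassicalSol A f T u) {t : ℝ}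
    (ht : t ∈ Ioc 0 T) (x : ℝ) (i : Fin N) :
    deriv (fun y => u y t i) x = deriv (fun y => u y t) x i :=
  deriv_apply_of_differentiableAt ((hu.2.2.2.1 t ht).differentiable two_ne_zero x) i

theorem IsBddClassicalSol.hasDerivAt_time (hu : IsBddClassicalSol A f T u) (hA : A.IsDiag)
    {x t : ℝ} (ht : t ∈ Ioc 0 T) (i : Fin N) :
    HasDerivAt (fun s => u x s i)
      (A i i * deriv (deriv fun y => u y t i) x + f (u x t) (deriv (fun y => u y t) x) i) t := by
  obtain ⟨-, -, hdt, hC2, heq⟩ := hu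
  have h := hasDerivAt_pi.1 (hdt x t ht).hasDerivAt i
  rwa [heq x t ht, Pi.add_apply, ← hA.diagonal_diag, Matrix.mulVec_diagonal,
    ← deriv_deriv_apply_of_contDiff (hC2 t ht)] at h

theorem IsBddClassicalSol.le_of_touch_barrier (hu : IsBddClassicalSol A f T u) (hA : A.IsDiag)
    (hApos : ∀ i, 0 ≤ A i i) (hq : IsQuasimonotone f) {e : Fin N → ℝ} (he : f e 0 = 0)
    {s : Set ((Fin N → ℝ) × (Fin N → ℝ))} (hs : Convex ℝ s)
    (hf : ∀ z ∈ s, DifferentiableAt ℝ (uncurry f) z) {L : ℝ}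
    (hL : ∀ z ∈ s, ‖fderiv ℝ (uncurry f) z‖ ≤ L) (hes : (e, 0) ∈ s)
    (hus : ∀ x, ∀ t ∈ Icc 0 T, (u x t, deriv (fun y => u y t) x) ∈ s)
    {ε K tc xc : ℝ} {i : Fin N} (hε : 0 < ε) (htc : tc ∈ Ioc 0 T)
    (htouch : u xc tc i - e i = barrier ε K xc tc)
    (hbelow : ∀ t ∈ Icc 0 tc, ∀ j x, u x t j - e j ≤ barrier ε K x t) :
    K ≤ 2 * A i i + (N + 2) * L := by
  set E := barrier ε K xc tc
  have hE : 0 < E := barrier_pos hε xc tc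
  have hL0 : 0 ≤ L := (norm_nonneg _).trans (hL _ hes)
  have htc' : tc ∈ Icc 0 T := Ioc_subset_Icc_self htc
  obtain ⟨hux, huxx⟩ := deriv_eq_and_deriv_deriv_le_of_forall_sub_le (x := xc)
    (contDiff_pi.1 (hu.2.2.2.1 tc htc) i) (contDiff_barrier_space (ε := ε) (K := K) tc)
    (fun y => by linarith [hbelow tc ⟨htc.1.le, le_rfl⟩ i y])
  rw [(hasDerivAt_barrier_space xc tc).deriv, hu.deriv_space_apply htc] at hux
  rw [deriv_deriv_barrier_space] at huxx
  have hut : K * E ≤ A i i * deriv (deriv fun y => u y tc i) xc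
      + f (u xc tc) (deriv (fun y => u y tc) xc) i := by
    have := ((hu.hasDerivAt_time hA (x := xc) htc i).sub
      (hasDerivAt_barrier_time (ε := ε) (K := K) xc tc)).nonneg_of_isMaxOn_Icc htc.1
      (isMaxOn_iff.2 fun t ht => by simp only [Pi.sub_apply]; linarith [hbelow t ht i xc])
    linarith
  have hreact : f (u xc tc) (deriv (fun y => u y tc) xc) i ≤ L * (N * E + 2 * E) := by
    have := hq.apply_sub_apply_le hs hf hL hes (hus xc tc htc') (htouch ▸ hE.le)
      (fun j => hbelow tc ⟨htc.1.le, le_rfl⟩ j xc)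
    rw [he, Pi.zero_apply, sub_zero, hux, abs_mul, abs_of_pos (by positivity)] at this
    exact this.trans (mul_le_mul_of_nonneg_left
      (by linarith [mul_exp_mul_abs_le_barrier (K := K) hε.le xc tc]) hL0)
  have hdiff : A i i * deriv (deriv fun y => u y tc i) xc ≤ A i i * (2 * E) :=
    mul_le_mul_of_nonneg_left
      (huxx.trans (by linarith [mul_exp_le_barrier (K := K) hε.le xc tc])) (hApos i)
  refine le_of_mul_le_mul_right ?_ hE
  linarith

theorem IsBddClassicalSol.exists_sub_lt_barrier (hu : IsBddClassicalSol A f T u)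
    (hA : A.IsDiag) (hApos : ∀ i, 0 ≤ A i i) (hf : ContDiff ℝ 1 (uncurry f))
    (hq : IsQuasimonotone f) {e : Fin N → ℝ} (he : f e 0 = 0)
    (hinit : ∀ x i, u x 0 i ≤ e i) :
    ∃ K, ∀ ε > 0, ∀ x, ∀ t ∈ Icc 0 T, ∀ i, u x t i - e i < barrier ε K x t := by
  obtain ⟨M, hM⟩ := hu.2.1
  set R := max M ‖e‖
  obtain ⟨L, hL⟩ := (isCompact_closedBall (0 : (Fin N → ℝ) × (Fin N → ℝ)) R)
    |>.exists_bound_of_continuousOn (hf.continuous_fderiv one_ne_zero).continuousOn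
  have hes : (e, 0) ∈ Metric.closedBall (0 : (Fin N → ℝ) × (Fin N → ℝ)) R := by
    simp [Prod.norm_def, R]
  have hus : ∀ x, ∀ t ∈ Icc 0 T, (u x t, deriv (fun y => u y t) x) ∈ Metric.closedBall 0 R :=
    fun x t ht => by
      simpa [Prod.norm_def, R] using Or.inl ⟨(hM x t ht).1, (hM x t ht).2⟩
  have hL0 : 0 ≤ L := (norm_nonneg _).trans (hL _ hes)
  -- larger than the bound of `le_of_touch_barrier` for every component
  set K := 2 * ∑ j, A j j + (N + 2) * L + 1
  have hK : 0 ≤ K := by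
    have := Finset.sum_nonneg fun j (_ : j ∈ Finset.univ) => hApos j
    have := mul_nonneg (by positivity : (0 : ℝ) ≤ N + 2) hL0
    linarith
  refine ⟨K, fun ε hε => ?_⟩
  by_contra! hbad
  obtain ⟨x₀, t₀, ht₀, i₀, h₀⟩ := hbad
  obtain ⟨tc, htc, ⟨i, xc, hzero⟩, hbelow⟩ :=
    exists_first_zero_time (g := fun j x t => u x t j - e j - barrier ε K x t) (r := (M + ‖e‖) / ε)
      (fun j => (((continuous_apply j).comp_continuousOn hu.1).sub continuousOn_const).sub
        (Continuous.continuousOn (by unfold barrier; fun_prop)))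
      (fun j x t ht hj => by
        have hux : ‖u x t j‖ ≤ M := (norm_le_pi_norm (u x t) j).trans (hM x t ht).1
        have hej : ‖e j‖ ≤ ‖e‖ := norm_le_pi_norm e j
        rw [Real.norm_eq_abs] at hux hej
        rw [le_div_iff₀ hε]
        linarith [mul_abs_le_barrier hε.le x (mul_nonneg hK ht.1), le_abs_self (u x t j),
          neg_abs_le (e j)])
      (fun j x => by linarith [hinit x j, barrier_pos (K := K) hε x 0]) ht₀ (sub_nonneg.2 h₀)
  have := hu.le_of_touch_barrier hA hApos hq he (convex_closedBall 0 R)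
    (fun z _ => hf.differentiable one_ne_zero z) hL hes hus hε htc (sub_eq_zero.1 hzero)
    (fun t ht j x => sub_nonpos.1 (hbelow t ht j x))
  have := Finset.single_le_sum (fun j _ => hApos j) (Finset.mem_univ i)
  linarith

theorem IsBddClassicalSol.le_of_forall_initial_le (hu : IsBddClassicalSol A f T u)
    (hA : A.IsDiag) (hApos : ∀ i, 0 ≤ A i i) (hf : ContDiff ℝ 1 (uncurry f))
    (hq : IsQuasimonotone f) {e : Fin N → ℝ} (he : f e 0 = 0)
    (hinit : ∀ x i, u x 0 i ≤ e i) :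
    ∀ x, ∀ t ∈ Icc 0 T, ∀ i, u x t i ≤ e i := by
  obtain ⟨K, hlt⟩ := hu.exists_sub_lt_barrier hA hApos hf hq he hinit
  intro x t ht i
  have hc : 0 < (1 + x ^ 2) * Real.exp (K * t) := by positivity
  refine le_of_forall_pos_lt_add fun δ hδ => ?_
  have := hlt (δ / ((1 + x ^ 2) * Real.exp (K * t))) (div_pos hδ hc) x t ht i
  rw [barrier, mul_assoc, div_mul_cancel₀ _ hc.ne'] at this
  linarith

end Solution

theorem order_interval_invariant_general
    (N : ℕ)
    (A : Matrix (Fin N) (Fin N) ℝ)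
    (hAdiag : ∀ i j, i ≠ j → A i j = 0) (hApos : ∀ i, 0 < A i i)
    (f : (Fin N → ℝ) → (Fin N → ℝ) → Fin N → ℝ)
    (hf : ContDiff ℝ 1 (fun q : (Fin N → ℝ) × (Fin N → ℝ) => f q.1 q.2))
    (hquasi : ∀ (w p : Fin N → ℝ) (i j : Fin N), i ≠ j →
      0 ≤ Du f w p i j ∧ Dp f w p i j = 0)
    (Em Ep : Fin N → ℝ)
    (hEm : f Em 0 = 0) (hEp : f Ep 0 = 0)
    (T : ℝ)
    (u : ℝ → ℝ → Fin N → ℝ)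
    (hu : IsBddClassicalSol A f T u)
    (hinit : ∀ x : ℝ, ∀ i : Fin N, Em i ≤ u x 0 i ∧ u x 0 i ≤ Ep i) :
    ∀ x : ℝ, ∀ t ∈ Set.Icc (0 : ℝ) T, ∀ i : Fin N,
      Em i ≤ u x t i ∧ u x t i ≤ Ep i := by
  have hApos' : ∀ i, 0 ≤ A i i := fun i => (hApos i).le
  have hupper := hu.le_of_forall_initial_le hAdiag hApos' hf hquasi hEp fun x i => (hinit x i).2
  have hlower := hu.neg.le_of_forall_initial_le hAdiag hApos' (hf.comp contDiff_neg).neg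
    (IsQuasimonotone.neg_comp_neg hquasi) (e := -Em) (by simp [hEm])
    fun x i => neg_le_neg (hinit x i).1
  intro x t ht i
  exact ⟨neg_le_neg_iff.1 (hlower x t ht i), hupper x t ht i⟩

/-- for a quasimonotone system, the order interval [E⁻, E⁺]
between two ordered equilibria is invariant for bounded classical solutions. -/
theorem order_interval_invariant
    (N : ℕ) (hN : 1 ≤ N)
    (A : Matrix (Fin N) (Fin N) ℝ)
    (hAdiag : ∀ i j, i ≠ j → A i j = 0) (hApos : ∀ i, 0 < A i i)
    (f : (Fin N → ℝ) → (Fin N → ℝ) → Fin N → ℝ)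
    (hf : ContDiff ℝ 1 (fun q : (Fin N → ℝ) × (Fin N → ℝ) => f q.1 q.2))
    (hquasi : ∀ (w p : Fin N → ℝ) (i j : Fin N), i ≠ j →
      0 ≤ Du f w p i j ∧ Dp f w p i j = 0)
    (Em Ep : Fin N → ℝ)
    (hEm : f Em 0 = 0) (hEp : f Ep 0 = 0)
    (hEmEp : ∀ i, Em i ≤ Ep i)
    (T : ℝ) (hT : 0 < T)
    (u : ℝ → ℝ → Fin N → ℝ)
    (hu : IsBddClassicalSol A f T u)
    (hinit : ∀ x : ℝ, ∀ i : Fin N, Em i ≤ u x 0 i ∧ u x 0 i ≤ Ep i) :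
    ∀ x : ℝ, ∀ t ∈ Set.Icc (0 : ℝ) T, ∀ i : Fin N,
      Em i ≤ u x t i ∧ u x t i ≤ Ep i :=
  order_interval_invariant_general N A hAdiag hApos f hf hquasi Em Ep hEm hEp T u hu hinit
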